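/- Let G be a simple graph with a vertex v and let k ≥ 1 be an integer. If the induced subgraph G \ v has a k-uniform 0-11-representant (i.e., G \ v is word-representable by a word in which every vertex occurs exactly k times), then G is (k−1)-11-representable. -/

import Mathlib

/-- Number of occurrences of the consecutive pattern 11 in a word,
i.e. the number of positions `i` with `u i = u (i+1)`. -/
def pattern11Count {V : Type*} [DecidableEq V] (u : List V) : ℕ :=
  (u.zip u.tail).countP (fun p => decide (p.1 = p.2))

/-- `w` is a `k`-11-representant of the simple graph `G`: every vertex occurs in `w`,
and two distinct vertices are adjacent iff the subword of `w` induced by them contains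
at most `k` occurrences of the consecutive pattern 11. -/
def IsK11Rep {V : Type*} [DecidableEq V] (G : SimpleGraph V) (k : ℕ) (w : List V) : Prop :=
  (∀ v : V, v ∈ w) ∧
  ∀ x y : V, x ≠ y →
    (G.Adj x y ↔ pattern11Count (w.filter (fun a => decide (a = x ∨ a = y))) ≤ k)

/-- A simple graph is `k`-11-representable if it has a `k`-11-representant. -/
def K11Representable {V : Type*} [DecidableEq V] (G : SimpleGraph V) (k : ℕ) : Prop :=
  ∃ w : List V, IsK11Rep G k w

/-- A graph is `t`-uniformly `k`-11-representable if it has a `k`-11-representant in which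
every vertex occurs exactly `t` times. -/
def UniformK11Rep {V : Type*} [DecidableEq V] (G : SimpleGraph V) (t k : ℕ) : Prop :=
  ∃ w : List V, IsK11Rep G k w ∧ ∀ v : V, w.count v = t

/-- The final permutation `σ(w)`: distinct letters of `w` in order of last occurrence. -/
def finalPerm {V : Type*} [DecidableEq V] (w : List V) : List V := w.dedup

/-- The initial permutation `π(w)`: distinct letters of `w` in order of first occurrence. -/
def initPerm {V : Type*} [DecidableEq V] (w : List V) : List V := (w.reverse.dedup).reverse

/-! Let `W` be a `k`-uniform word-representant of `G \ v`, let `σ` be its final permutation, and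
let `N` and `M` list the neighbours and the non-neighbours of `v` in `σ`-order.

For `k = m + 2` take `W ++ M ++ [v] ++ N ++ Z`, where `Z = v σᴿ v σ v σᴿ ⋯` has `m + 1` blocks.
Restricted to two vertices `a, b ≠ v`, with `σ` listing `a` before `b`, the restriction of `W` ends
with `b`, the middle part is `ab` or `ba`, and `Z` contributes `baabba⋯`; either way exactly
`m + 1` patterns are added to those of `W`, so the threshold `0` becomes `m + 1`. Restricted to
`x` and `v` it reads `x^(m+2) v x (v x)^(m+1)` if `x ∈ N`, with `m + 1` patterns, and
`x^(m+3) v (v x)^(m+1)` otherwise, with `m + 3`.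

For `k = 1` the graph `G \ v` is complete and `M ++ N ++ M ++ [v]` has no pattern `11` on any
pair except `x x v` for the non-neighbours `x` of `v`. -/

section PatternCount

variable {V : Type*} [DecidableEq V]

@[simp] lemma pattern11Count_nil : pattern11Count ([] : List V) = 0 := rfl

@[simp] lemma pattern11Count_singleton (a : V) : pattern11Count [a] = 0 := rfl

lemma pattern11Count_cons (a : V) (l : List V) :
    pattern11Count (a :: l) = (if l.head? = some a then 1 else 0) + pattern11Count l := by
  cases l with
  | nil => rfl
  | cons b l =>
    simp only [pattern11Count, List.tail_cons, List.zip_cons_cons, List.countP_cons,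
      List.head?_cons, Option.some.injEq, decide_eq_true_eq, eq_comm (a := b)]
    omega

lemma pattern11Count_append (l₁ l₂ : List V) :
    pattern11Count (l₁ ++ l₂) =
      pattern11Count l₁ + pattern11Count (l₁.getLast?.toList ++ l₂) := by
  induction l₁ with
  | nil => simp
  | cons a t ih =>
    cases t with
    | nil => simp
    | cons b t => simp_all [pattern11Count_cons, Nat.add_assoc]

lemma pattern11Count_replicate (n : ℕ) (a : V) :
    pattern11Count (List.replicate n a) = n - 1 := by
  induction n with
  | zero => rfl
  | succ n ih => cases n <;> simp_all [List.replicate_succ, pattern11Count_cons]; omega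

lemma pattern11Count_map {W : Type*} [DecidableEq W] {f : V → W} (hf : Function.Injective f)
    (l : List V) : pattern11Count (l.map f) = pattern11Count l := by
  induction l with
  | nil => rfl
  | cons a l ih => cases l <;> simp_all [pattern11Count_cons, hf.eq_iff]

end PatternCount

section Zigzag

variable {α : Type*}

def zigzag (s : List α) : List α → ℕ → List α
  | _, 0 => []
  | q, m + 1 => s ++ q ++ zigzag s q.reverse m

lemma filter_zigzag (p : α → Bool) (s q : List α) (m : ℕ) :
    (zigzag s q m).filter p = zigzag (s.filter p) (q.filter p) m := by
  induction m generalizing q with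
  | zero => rfl
  | succ m ih => simp [zigzag, ih, List.filter_reverse]

lemma head?_zigzag (s q : List α) (m : ℕ) (h : s ++ q ≠ []) :
    (zigzag s q (m + 1)).head? = (s ++ q).head? := by
  obtain ⟨c, l, hc⟩ := List.exists_cons_of_ne_nil h
  simp [zigzag, hc]

variable [DecidableEq α]

lemma pattern11Count_zigzag_pair {a b : α} (hab : a ≠ b) (m : ℕ) :
    pattern11Count (zigzag [] [a, b] (m + 1)) = m := by
  induction m generalizing a b with
  | zero => simp [zigzag, pattern11Count_cons, hab.symm]
  | succ m ih =>
    have h := ih hab.symm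
    simp only [zigzag, List.nil_append, List.reverse_cons, List.reverse_nil,
      List.cons_append] at h ⊢
    simp [pattern11Count_cons, h, hab.symm, Nat.add_comm]

lemma pattern11Count_zigzag_single {x v : α} (hxv : x ≠ v) (m : ℕ) :
    pattern11Count (zigzag [v] [x] m) = 0 := by
  induction m with
  | zero => rfl
  | succ m ih => cases m <;> simp_all [zigzag, pattern11Count_cons, hxv.symm]

end Zigzag

section Permutations

variable {V : Type*} [DecidableEq V]

lemma finalPerm_filter (p : V → Bool) (l : List V) :
    (finalPerm l).filter p = finalPerm (l.filter p) := by
  induction l with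
  | nil => rfl
  | cons a l ih =>
    simp only [finalPerm] at ih ⊢
    by_cases ha : a ∈ l <;> by_cases hpa : p a <;>
      simp_all [List.dedup_cons_of_mem, List.dedup_cons_of_notMem]

lemma getLast?_finalPerm (l : List V) : (finalPerm l).getLast? = l.getLast? := by
  induction l with
  | nil => rfl
  | cons a l ih =>
    simp only [finalPerm] at ih ⊢
    by_cases ha : a ∈ l
    · rw [List.dedup_cons_of_mem ha, ih]
      cases l <;> simp_all
    · rw [List.dedup_cons_of_notMem ha, List.getLast?_cons, List.getLast?_cons, ih]

lemma List.Nodup.filter_eq_pair {σ : List V} (hσ : σ.Nodup) {x y : V} (hx : x ∈ σ) (hy : y ∈ σ)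
    (hxy : x ≠ y) :
    σ.filter (fun a => a = x ∨ a = y) = [x, y] ∨ σ.filter (fun a => a = x ∨ a = y) = [y, x] :=
  List.perm_pair.mp <| (List.perm_ext_iff_of_nodup (hσ.filter _) (by simp [hxy])).mpr fun a => by
    simp only [List.mem_filter, decide_eq_true_eq, List.mem_cons, List.not_mem_nil, or_false]
    constructor
    · exact And.right
    · rintro (rfl | rfl) <;> simp [hx, hy]

lemma List.Nodup.filter_eq_singleton {σ : List V} (hσ : σ.Nodup) {x v : V} (hx : x ∈ σ)
    (hv : v ∉ σ) : σ.filter (fun a => a = x ∨ a = v) = [x] :=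
  List.perm_singleton.mp <|
    (List.perm_ext_iff_of_nodup (hσ.filter _) (List.nodup_singleton x)).mpr fun a => by
      simp only [List.mem_filter, decide_eq_true_eq, List.mem_singleton]
      constructor
      · rintro ⟨ha, rfl | rfl⟩
        · rfl
        · exact absurd ha hv
      · rintro rfl
        exact ⟨hx, Or.inl rfl⟩

end Permutations

section Construction

variable {V : Type*} [DecidableEq V]

/-- `W` is a `k`-uniform `0`-11-representant of `G \ v`, written as a word over `V`. -/
structure IsUniformWordRepDeleteVertex (G : SimpleGraph V) (v : V) (k : ℕ) (W : List V) :
    Prop where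
  not_mem : v ∉ W
  count_eq : ∀ x, x ≠ v → W.count x = k
  adj_iff : ∀ x y, x ≠ v → y ≠ v → x ≠ y →
    (G.Adj x y ↔ pattern11Count (W.filter fun a => a = x ∨ a = y) = 0)

variable {G : SimpleGraph V} {v : V} {k : ℕ}

lemma isK11Rep_of_cases {σ u : List V} (hσ : σ.Nodup) (hσv : ∀ x, x ∈ σ ↔ x ≠ v)
    (hu : ∀ x, x ∈ u)
    (hvx : ∀ x, x ≠ v → (G.Adj v x ↔ pattern11Count (u.filter fun a => a = x ∨ a = v) ≤ k))
    (hpair : ∀ a b, a ≠ v → b ≠ v → a ≠ b → σ.filter (fun c => c = a ∨ c = b) = [a, b] →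
      (G.Adj a b ↔ pattern11Count (u.filter fun c => c = a ∨ c = b) ≤ k)) :
    IsK11Rep G k u := by
  refine ⟨hu, fun x y hxy => ?_⟩
  have hswap : (fun a => decide (a = y ∨ a = x)) = fun a => decide (a = x ∨ a = y) := by
    funext a
    simp [or_comm]
  by_cases hx : x = v
  · subst hx
    rw [← hswap]
    exact hvx y (Ne.symm hxy)
  by_cases hy : y = v
  · subst hy
    rw [G.adj_comm]
    exact hvx x hx
  rcases hσ.filter_eq_pair ((hσv x).2 hx) ((hσv y).2 hy) hxy with h | h
  · exact hpair x y hx hy hxy h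
  · rw [G.adj_comm, ← hswap]
    exact hpair y x hy hx hxy.symm (by rwa [hswap])

lemma UniformK11Rep.exists_isUniformWordRepDeleteVertex
    (h : UniformK11Rep (G.induce {u | u ≠ v}) k 0) :
    ∃ W, IsUniformWordRepDeleteVertex G v k W := by
  obtain ⟨w, ⟨-, hadj⟩, hcount⟩ := h
  refine ⟨w.map Subtype.val, ?_, fun x hx => ?_, fun x y hx hy hxy => ?_⟩
  · simp
  · rw [← hcount ⟨x, hx⟩]
    convert List.count_map_of_injective w _ Subtype.val_injective ⟨x, hx⟩
  · rw [List.filter_map, pattern11Count_map Subtype.val_injective, ← Nat.le_zero]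
    convert hadj ⟨x, hx⟩ ⟨y, hy⟩ (by simpa using hxy) using 4
    · simp
    · ext a
      simp [Subtype.ext_iff]

namespace IsUniformWordRepDeleteVertex

variable {W : List V}

lemma mem_iff (hW : IsUniformWordRepDeleteVertex G v k W) (hk : k ≠ 0) (x : V) :
    x ∈ W ↔ x ≠ v :=
  ⟨fun hx h => hW.not_mem (h ▸ hx),
    fun hx => List.count_pos_iff.mp (by rw [hW.count_eq x hx]; omega)⟩

lemma filter_eq_replicate (hW : IsUniformWordRepDeleteVertex G v k W) {x : V} (hx : x ≠ v) :
    W.filter (fun a => a = x ∨ a = v) = List.replicate k x := by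
  rw [← hW.count_eq x hx, ← List.filter_eq]
  refine List.filter_congr fun a ha => ?_
  have : a ≠ v := fun h => hW.not_mem (h ▸ ha)
  simp [this]

theorem k11Representable_zero (hW : IsUniformWordRepDeleteVertex G v 1 W) :
    K11Representable G 0 := by
  classical
  have hnodup : W.Nodup := List.nodup_iff_count_le_one.mpr fun x => by
    by_cases hx : x = v
    · simp [hx, List.count_eq_zero.mpr hW.not_mem]
    · simp [hW.count_eq x hx]
  set N := W.filter (G.Adj v ·)
  set M := W.filter (¬G.Adj v ·)
  refine ⟨M ++ N ++ M ++ [v], isK11Rep_of_cases hnodup (hW.mem_iff one_ne_zero) ?_ ?_ ?_⟩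
  · intro x
    by_cases hx : x = v
    · simp [hx]
    · have := (hW.mem_iff one_ne_zero x).mpr hx
      by_cases h : G.Adj v x <;> simp [N, M, this, h]
  · intro x hx
    simp only [N, M, List.filter_append, List.filter_comm (fun a => decide (a = x ∨ a = v)) _,
      hnodup.filter_eq_singleton ((hW.mem_iff one_ne_zero x).mpr hx) hW.not_mem]
    by_cases h : G.Adj v x <;> simp [h, pattern11Count_cons, hx.symm]
  · intro a b ha hb hab hWab
    have hadj : G.Adj a b :=
      (hW.adj_iff a b ha hb hab).mpr (by rw [hWab]; simp [pattern11Count_cons, hab.symm])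
    simp only [N, M, List.filter_append, List.filter_comm (fun c => decide (c = a ∨ c = b)) _,
      hWab]
    by_cases ha' : G.Adj v a <;> by_cases hb' : G.Adj v b <;>
      simp [ha', hb', hadj, pattern11Count_cons, hab, hab.symm, ha.symm, hb.symm]

theorem k11Representable (m : ℕ) (hW : IsUniformWordRepDeleteVertex G v (m + 2) W) :
    K11Representable G (m + 1) := by
  classical
  set σ := finalPerm W
  have hσ : σ.Nodup := List.nodup_dedup W
  have hσv : ∀ x, x ∈ σ ↔ x ≠ v := fun x => List.mem_dedup.trans (hW.mem_iff (by omega) x)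
  set N := σ.filter (G.Adj v ·)
  set M := σ.filter (¬G.Adj v ·)
  refine ⟨W ++ M ++ [v] ++ N ++ zigzag [v] σ.reverse (m + 1),
    isK11Rep_of_cases hσ hσv ?_ ?_ ?_⟩
  · intro x
    by_cases hx : x = v
    · simp [hx]
    · simp [(hW.mem_iff (by omega) x).mpr hx]
  · intro x hx
    simp only [N, M, List.filter_append, List.filter_comm (fun a => decide (a = x ∨ a = v)) _,
      hσ.filter_eq_singleton ((hσv x).mpr hx) (fun h => (hσv v).mp h rfl),
      hW.filter_eq_replicate hx, filter_zigzag, List.filter_reverse, List.append_assoc]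
    rw [pattern11Count_append]
    by_cases h : G.Adj v x <;>
      simp [h, List.getLast?_replicate, pattern11Count_cons, pattern11Count_replicate,
        head?_zigzag, pattern11Count_zigzag_single hx, hx, hx.symm]
  · intro a b ha hb hab hσab
    have hlast : (W.filter fun c => c = a ∨ c = b).getLast? = some b := by
      rw [← getLast?_finalPerm, ← finalPerm_filter, hσab]
      rfl
    simp only [N, M, List.filter_append, List.filter_comm (fun c => decide (c = a ∨ c = b)) _,
      hσab, filter_zigzag, List.filter_reverse, List.append_assoc]
    rw [pattern11Count_append, hlast, hW.adj_iff a b ha hb hab]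
    by_cases ha' : G.Adj v a <;> by_cases hb' : G.Adj v b <;>
      simp [ha', hb', pattern11Count_cons, head?_zigzag, pattern11Count_zigzag_pair hab.symm,
        hab, hab.symm, ha.symm, hb.symm] <;> omega

end IsUniformWordRepDeleteVertex

end Construction

theorem k11Representable_of_uniform_wordRep_deleteVertex_general {V : Type*} [DecidableEq V]
    (G : SimpleGraph V) (v : V) (k : ℕ) (hk : 1 ≤ k)
    (h : UniformK11Rep (G.induce {u : V | u ≠ v}) k 0) :
    K11Representable G (k - 1) := by
  obtain ⟨W, hW⟩ := h.exists_isUniformWordRepDeleteVertex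
  obtain ⟨m, rfl | rfl⟩ : ∃ m, k = 1 ∨ k = m + 2 := ⟨k - 2, by omega⟩
  · exact hW.k11Representable_zero
  · exact hW.k11Representable m

/-- if `G \ v` has a `k`-uniform word-representant (`k ≥ 1`),
then `G` is `(k-1)`-11-representable. -/
theorem k11Representable_of_uniform_wordRep_deleteVertex {V : Type*} [DecidableEq V]
    [Fintype V] (G : SimpleGraph V) (v : V) (k : ℕ) (hk : 1 ≤ k)
    (h : UniformK11Rep (G.induce {u : V | u ≠ v}) k 0) :
    K11Representable G (k - 1) :=
  k11Representable_of_uniform_wordRep_deleteVertex_general G v k hk h
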